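/- arXiv:1007.3059 — 5 statements merged into one kernel-verified Lean document; each statement's English description precedes it below -/
import Mathlib

section
/- Let f : [0,1] → [0,1] be continuous with zero topological entropy, and let x ∈ [0,1] with ω_f(x) infinite. If J is a closed subinterval of [0,1] containing three distinct points of ω_f(x), then J contains a periodic point of f. -/
/-!
Suppose `J = [a, b]` contains no periodic point. By the intermediate value theorem each iterate
`f^[n]`, `n > 0`, moves all points of `J` in the same direction, and comparing the direction of
`n` with that of its multiples shows that the successive visits of any orbit to `J` are monotone.
Say they decrease (the increasing case is the order dual). Then the ω-limit set meets the
interior of `J` in at most one point `p`, which lies below every visit, so a second ω-limit point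
above `p` must be `b`. Two visits near `p` give a time `G` moving `J` to the left and some
`z ∈ [a, b)` with `f^[G] z = p`; a later visit near `b` gives a time `n` moving `J` to the right,
whence `f^[n] p ≥ b`. Then `f^[n + G]` moves `z` to the right but moves the visit near `p` to the
left.
-/

open Filter Topology

/-- The unit interval `[0,1]` as a subtype of `ℝ`. -/
abbrev UI := Set.Icc (0 : ℝ) 1

/-- The ω-limit set of a point `x` under `f`: the set of limit points of the orbit. -/
def omegaSet (f : UI → UI) (x : UI) : Set UI :=
  {y | ∃ φ : ℕ → ℕ, StrictMono φ ∧ Tendsto (fun n => f^[φ n] x) atTop (𝓝 y)}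

/-- `p` is a periodic point of `f`. -/
def IsPerPt (f : UI → UI) (p : UI) : Prop := ∃ n ≥ 1, f^[n] p = p

open Function Set OrderDual

section ClusterPoints

variable {X : Type*} [TopologicalSpace X] {f : X → X} {x w : X}

theorem MapClusterPt.exists_iterate_mem_ge (h : MapClusterPt w atTop (f^[·] x)) {s : Set X}
    (hs : s ∈ 𝓝 w) (N : ℕ) : ∃ n ≥ N, f^[n] x ∈ s :=
  (mapClusterPt_iff_frequently.mp h s hs).forall_exists_of_atTop N

theorem MapClusterPt.iterate (hf : Continuous f) (h : MapClusterPt w atTop (f^[·] x)) (k : ℕ) :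
    MapClusterPt (f^[k] w) atTop (f^[·] x) := by
  have hshift : f^[k] ∘ (f^[·] x) = (f^[·] x) ∘ (· + k) := by
    funext n
    rw [comp_apply, comp_apply, ← iterate_add_apply, add_comm]
  exact .of_comp (tendsto_add_atTop_nat k) (hshift ▸ h.continuousAt_comp (hf.iterate k).continuousAt)

end ClusterPoints

section NoPeriodicPoints

variable {X : Type*} [LinearOrder X] [TopologicalSpace X] [OrderClosedTopology X]
  {f : X → X} {J : Set X}

theorem lt_iterate_of_lt_iterate (hJ : IsPreconnected J) (hf : Continuous f)
    (hper : ∀ z ∈ J, z ∉ periodicPts f) {n : ℕ} (hn : 0 < n) {z w : X} (hz : z ∈ J) (hw : w ∈ J)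
    (hzn : z < f^[n] z) : w < f^[n] w := by
  by_contra! hwn
  obtain ⟨y, hy, hfix⟩ :=
    hJ.intermediate_value₂ hz hw continuousOn_id (hf.iterate n).continuousOn hzn.le hwn
  exact hper y hy (mk_mem_periodicPts hn hfix.symm)

theorem iterate_lt_of_iterate_lt (hJ : IsPreconnected J) (hf : Continuous f)
    (hper : ∀ z ∈ J, z ∉ periodicPts f) {n : ℕ} (hn : 0 < n) {z w : X} (hz : z ∈ J) (hw : w ∈ J)
    (hzn : f^[n] z < z) : f^[n] w < w :=
  lt_iterate_of_lt_iterate (X := Xᵒᵈ) hJ hf hper hn hz hw hzn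

theorem lt_iterate_mul_of_lt_iterate (hJ : IsPreconnected J) (hf : Continuous f)
    (hper : ∀ z ∈ J, z ∉ periodicPts f) {d : ℕ} (hd : 0 < d) {z : X} (hz : z ∈ J)
    (hdz : f^[d] z ∈ J) (hzd : z < f^[d] z) {k : ℕ} (hk : 0 < k) {w : X} (hw : w ∈ J) :
    w < f^[k * d] w := by
  induction k, hk using Nat.le_induction generalizing w with
  | base => simpa using lt_iterate_of_lt_iterate hJ hf hper hd hz hw hzd
  | succ k hk ih =>
    refine lt_iterate_of_lt_iterate hJ hf hper (by positivity) hz hw ?_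
    calc z < f^[d] z := hzd
      _ < f^[k * d] (f^[d] z) := ih hdz
      _ = f^[(k + 1) * d] z := by rw [← iterate_add_apply, add_mul, one_mul]

theorem le_iterate_of_lt_iterate_of_iterate_mem (hJ : IsPreconnected J) (hf : Continuous f)
    (hper : ∀ z ∈ J, z ∉ periodicPts f) {d e : ℕ} (hd : 0 < d) (he : 0 < e) {z w : X}
    (hz : z ∈ J) (hdz : f^[d] z ∈ J) (hzd : z < f^[d] z) (hw : w ∈ J) (hew : f^[e] w ∈ J) :
    w ≤ f^[e] w := by
  by_contra! hwe
  have hpos := lt_iterate_mul_of_lt_iterate hJ hf hper hd hz hdz hzd he hz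
  have hneg : f^[d * e] z < z :=
    lt_iterate_mul_of_lt_iterate (X := Xᵒᵈ) hJ hf hper he hw hew hwe hd hz
  rw [mul_comm] at hneg
  exact lt_asymm hpos hneg

theorem strictMonoOn_or_strictAntiOn_iterate (hJ : IsPreconnected J) (hf : Continuous f)
    (hper : ∀ z ∈ J, z ∉ periodicPts f) (x : X) :
    StrictMonoOn (f^[·] x) {n | f^[n] x ∈ J} ∨ StrictAntiOn (f^[·] x) {n | f^[n] x ∈ J} := by
  have hstep : ∀ {m n}, m < n → f^[n - m] (f^[m] x) = f^[n] x := fun hmn => by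
    rw [← iterate_add_apply, Nat.sub_add_cancel hmn.le]
  have hne : ∀ {m n}, m < n → f^[m] x ∈ J → f^[n] x ≠ f^[m] x := fun hmn hm heq =>
    hper _ hm (mk_mem_periodicPts (Nat.sub_pos_of_lt hmn) ((hstep hmn).trans heq))
  by_contra! h
  simp only [StrictMonoOn, StrictAntiOn, mem_ofPred_eq, not_forall, not_lt] at h
  obtain ⟨⟨m, hm, n, hn, hmn, hnm⟩, ⟨m', hm', n', hn', hmn', hle'⟩⟩ := h
  have hup : f^[m'] x < f^[n' - m'] (f^[m'] x) := by
    rw [hstep hmn']; exact hle'.lt_of_ne (hne hmn' hm').symm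
  have hdown : f^[n - m] (f^[m] x) < f^[m] x := by
    rw [hstep hmn]; exact hnm.lt_of_ne (hne hmn hm)
  refine hdown.not_ge (le_iterate_of_lt_iterate_of_iterate_mem hJ hf hper
    (Nat.sub_pos_of_lt hmn') (Nat.sub_pos_of_lt hmn) hm' ?_ hup hm ?_)
  · rwa [hstep hmn']
  · rwa [hstep hmn]

end NoPeriodicPoints

section AntitoneVisits

variable {X : Type*} [LinearOrder X] [TopologicalSpace X] [OrderClosedTopology X]
  {f : X → X} {J : Set X} {x : X}

theorem lt_iterate_of_strictAntiOn (hanti : StrictAntiOn (f^[·] x) {n | f^[n] x ∈ J}) {w : X}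
    (hw : MapClusterPt w atTop (f^[·] x)) (hJw : J ∈ 𝓝 w) {n : ℕ} (hn : f^[n] x ∈ J) :
    w < f^[n] x := by
  have hle : ∀ m, f^[m] x ∈ J → w ≤ f^[m] x := by
    intro m hm
    by_contra! hmw
    obtain ⟨k, hk, hkJ, hkm⟩ := hw.exists_iterate_mem_ge (inter_mem hJw (Ioi_mem_nhds hmw)) (m + 1)
    exact (hanti hm hkJ (by omega)).not_gt hkm
  obtain ⟨k, hk, hkJ⟩ := hw.exists_iterate_mem_ge hJw (n + 1)
  exact (hle k hkJ).trans_lt (hanti hn hkJ (by omega))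

theorem eq_of_strictAntiOn (hanti : StrictAntiOn (f^[·] x) {n | f^[n] x ∈ J}) {u v : X}
    (hu : MapClusterPt u atTop (f^[·] x)) (hJu : J ∈ 𝓝 u)
    (hv : MapClusterPt v atTop (f^[·] x)) (hJv : J ∈ 𝓝 v) : u = v := by
  have hle : ∀ {u v : X}, MapClusterPt u atTop (f^[·] x) → J ∈ 𝓝 u →
      MapClusterPt v atTop (f^[·] x) → J ∈ 𝓝 v → u ≤ v := by
    intro u v hu hJu hv hJv
    by_contra! hvu
    obtain ⟨k, -, hkJ, hku⟩ := hv.exists_iterate_mem_ge (inter_mem hJv (Iio_mem_nhds hvu)) 0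
    exact (lt_iterate_of_strictAntiOn hanti hu hJu hkJ).not_gt hku
  exact le_antisymm (hle hu hJu hv hJv) (hle hv hJv hu hJu)

end AntitoneVisits

section LinearContinuum

variable {X : Type*} [ConditionallyCompleteLinearOrder X] [TopologicalSpace X] [OrderTopology X]
  [DenselyOrdered X] {f : X → X} {a b x p r : X}

theorem exists_iterate_eq_of_strictAntiOn (hf : Continuous f)
    (hper : ∀ z ∈ Icc a b, z ∉ periodicPts f)
    (hanti : StrictAntiOn (f^[·] x) {n | f^[n] x ∈ Icc a b})
    (hp : MapClusterPt p atTop (f^[·] x)) (hap : a < p) (hpb : p < b) :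
    ∃ G > 0, (∀ z ∈ Icc a b, f^[G] z < z) ∧ ∃ z ∈ Ico a b, f^[G] z = p := by
  have hJp : Icc a b ∈ 𝓝 p := Icc_mem_nhds hap hpb
  have hpJ : p ∈ Icc a b := ⟨hap.le, hpb.le⟩
  obtain ⟨τ₁, -, hτ₁a, hτ₁b⟩ := hp.exists_iterate_mem_ge (Ioo_mem_nhds hap hpb) 0
  obtain ⟨τ₂, hτ₁₂, hτ₂⟩ := hp.exists_iterate_mem_ge hJp (τ₁ + 1)
  have hτ₁ : f^[τ₁] x ∈ Icc a b := ⟨hτ₁a.le, hτ₁b.le⟩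
  have hG : f^[τ₂ - τ₁] (f^[τ₁] x) = f^[τ₂] x := by rw [← iterate_add_apply]; congr 1; omega
  have hτ₂τ₁ : f^[τ₂] x < f^[τ₁] x := hanti hτ₁ hτ₂ (by omega)
  have hpτ₂ : p < f^[τ₂] x := lt_iterate_of_strictAntiOn hanti hp hJp hτ₂
  have hGneg : ∀ z ∈ Icc a b, f^[τ₂ - τ₁] z < z := fun z hz =>
    iterate_lt_of_iterate_lt isPreconnected_Icc hf hper (by omega) hτ₁ hz (hG ▸ hτ₂τ₁)
  -- `f^[τ₂ - τ₁] p` is an ω-limit point below `p`, so it cannot lie in `(a, b)`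
  have hGp : f^[τ₂ - τ₁] p ≤ a := by
    by_contra! h
    exact (hGneg p hpJ).ne (eq_of_strictAntiOn hanti (hp.iterate hf _)
      (Icc_mem_nhds h ((hGneg p hpJ).trans hpb)) hp hJp)
  obtain ⟨z, hz, hGz⟩ : ∃ z ∈ Icc p (f^[τ₁] x), f^[τ₂ - τ₁] z = p :=
    intermediate_value_Icc (hpτ₂.trans hτ₂τ₁).le (hf.iterate _).continuousOn
      ⟨hGp.trans hap.le, hG ▸ hpτ₂.le⟩
  exact ⟨τ₂ - τ₁, by omega, hGneg, z, ⟨hap.le.trans hz.1, hz.2.trans_lt hτ₁b⟩, hGz⟩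

theorem not_mapClusterPt_right_of_strictAntiOn (hf : Continuous f)
    (hper : ∀ z ∈ Icc a b, z ∉ periodicPts f)
    (hanti : StrictAntiOn (f^[·] x) {n | f^[n] x ∈ Icc a b})
    (hp : MapClusterPt p atTop (f^[·] x)) (hap : a < p) (hpb : p < b) :
    ¬ MapClusterPt b atTop (f^[·] x) := by
  intro hb
  have hJp : Icc a b ∈ 𝓝 p := Icc_mem_nhds hap hpb
  have hpJ : p ∈ Icc a b := ⟨hap.le, hpb.le⟩
  obtain ⟨G, hG, hGneg, z, hz, hGz⟩ := exists_iterate_eq_of_strictAntiOn hf hper hanti hp hap hpb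
  have hGb : f^[G] b ≤ p := by
    by_contra! h
    exact h.ne' (eq_of_strictAntiOn hanti (hb.iterate hf G)
      (Icc_mem_nhds (hap.trans h) (hGneg b ⟨(hap.trans hpb).le, le_rfl⟩)) hp hJp)
  obtain ⟨τ, -, hτa, hτb⟩ := hp.exists_iterate_mem_ge (Ioo_mem_nhds hap hpb) 0
  have hτ : f^[τ] x ∈ Icc a b := ⟨hτa.le, hτb.le⟩
  have hpτ : p < f^[τ] x := lt_iterate_of_strictAntiOn hanti hp hJp hτ
  have hnhds : {y | f^[G] y < f^[τ] x} ∩ Ioi (f^[τ] x) ∈ 𝓝 b :=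
    inter_mem ((isOpen_lt (hf.iterate G) continuous_const).mem_nhds (hGb.trans_lt hpτ))
      (Ioi_mem_nhds hτb)
  obtain ⟨γ, hγ, hγG, hγτ⟩ := hb.exists_iterate_mem_ge hnhds (τ + 1)
  have hn : f^[γ - τ] (f^[τ] x) = f^[γ] x := by rw [← iterate_add_apply]; congr 1; omega
  have hnpos : ∀ y ∈ Icc a b, y < f^[γ - τ] y := fun y hy =>
    lt_iterate_of_lt_iterate isPreconnected_Icc hf hper (by omega) hτ hy (hn ▸ hγτ)
  -- `f^[γ - τ] p` is an ω-limit point above `p`, so it cannot lie in `(a, b)`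
  have hbp : b ≤ f^[γ - τ] p := by
    by_contra! h
    exact (hnpos p hpJ).ne' (eq_of_strictAntiOn hanti (hp.iterate hf _)
      (Icc_mem_nhds (hap.trans (hnpos p hpJ)) h) hp hJp)
  -- the iterate `f^[γ - τ + G]` moves `z` to the right, but `f^[τ] x` to the left
  have hpos : f^[τ] x < f^[γ - τ + G] (f^[τ] x) := by
    refine lt_iterate_of_lt_iterate isPreconnected_Icc hf hper (by omega) (Ico_subset_Icc_self hz)
      hτ ?_
    calc z < b := hz.2
      _ ≤ f^[γ - τ] p := hbp
      _ = f^[γ - τ + G] z := by rw [iterate_add_apply, hGz]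
  rw [add_comm, iterate_add_apply, hn] at hpos
  exact lt_asymm hpos hγG

theorem not_mapClusterPt_of_strictAntiOn (hf : Continuous f)
    (hper : ∀ z ∈ Icc a b, z ∉ periodicPts f)
    (hanti : StrictAntiOn (f^[·] x) {n | f^[n] x ∈ Icc a b})
    (hp : MapClusterPt p atTop (f^[·] x)) (hap : a < p) (hpr : p < r) (hrb : r ≤ b) :
    ¬ MapClusterPt r atTop (f^[·] x) := by
  intro hr
  rcases hrb.eq_or_lt with rfl | hrb
  · exact not_mapClusterPt_right_of_strictAntiOn hf hper hanti hp hap hpr hr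
  · exact hpr.ne' (eq_of_strictAntiOn hanti hr (Icc_mem_nhds (hap.trans hpr) hrb) hp
      (Icc_mem_nhds hap (hpr.trans hrb)))

theorem not_lt_lt_of_mapClusterPt (hf : Continuous f) (hper : ∀ z ∈ Icc a b, z ∉ periodicPts f)
    {q₁ q₂ q₃ : X} (hq₁ : q₁ ∈ Icc a b) (hq₃ : q₃ ∈ Icc a b)
    (h₁ : MapClusterPt q₁ atTop (f^[·] x)) (h₂ : MapClusterPt q₂ atTop (f^[·] x))
    (h₃ : MapClusterPt q₃ atTop (f^[·] x)) : ¬ (q₁ < q₂ ∧ q₂ < q₃) := by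
  rintro ⟨h₁₂, h₂₃⟩
  rcases strictMonoOn_or_strictAntiOn_iterate isPreconnected_Icc hf hper x with hmono | hanti
  · refine not_mapClusterPt_of_strictAntiOn (X := Xᵒᵈ) (a := toDual b) (b := toDual a) hf
      (fun z hz => hper z ⟨hz.2, hz.1⟩) ?_ h₂ (h₂₃.trans_le hq₃.2) h₁₂ hq₁.1 h₁
    rw [Icc_toDual]
    exact hmono
  · exact not_mapClusterPt_of_strictAntiOn hf hper hanti h₂ (hq₁.1.trans_lt h₁₂) h₂₃ hq₃.2 h₃

end LinearContinuum

theorem exists_mem_lt_lt_of_ne {α : Type*} [LinearOrder α] {s : Set α} {a b c : α}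
    (ha : a ∈ s) (hb : b ∈ s) (hc : c ∈ s) (hab : a ≠ b) (hac : a ≠ c) (hbc : b ≠ c) :
    ∃ x ∈ s, ∃ y ∈ s, ∃ z ∈ s, x < y ∧ y < z := by
  rcases hab.lt_or_gt with h₁ | h₁ <;> rcases hac.lt_or_gt with h₂ | h₂ <;>
    rcases hbc.lt_or_gt with h₃ | h₃ <;>
    first
    | exact ⟨_, ha, _, hb, _, hc, ‹_›, ‹_›⟩
    | exact ⟨_, ha, _, hc, _, hb, ‹_›, ‹_›⟩
    | exact ⟨_, hb, _, ha, _, hc, ‹_›, ‹_›⟩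
    | exact ⟨_, hb, _, hc, _, ha, ‹_›, ‹_›⟩
    | exact ⟨_, hc, _, ha, _, hb, ‹_›, ‹_›⟩
    | exact ⟨_, hc, _, hb, _, ha, ‹_›, ‹_›⟩

theorem mapClusterPt_of_mem_omegaSet {f : UI → UI} {x y : UI} (hy : y ∈ omegaSet f x) :
    MapClusterPt y atTop (f^[·] x) :=
  let ⟨_, hφ, hy⟩ := hy
  .of_comp hφ.tendsto_atTop hy.mapClusterPt

theorem stmt_1_general (f : UI → UI) (hf : Continuous f)
    (x : UI)
    (a b : UI) (p₁ p₂ p₃ : UI)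
    (hp₁ : p₁ ∈ Set.Icc a b ∩ omegaSet f x)
    (hp₂ : p₂ ∈ Set.Icc a b ∩ omegaSet f x)
    (hp₃ : p₃ ∈ Set.Icc a b ∩ omegaSet f x)
    (h12 : p₁ ≠ p₂) (h13 : p₁ ≠ p₃) (h23 : p₂ ≠ p₃) :
    ∃ p ∈ Set.Icc a b, IsPerPt f p := by
  by_contra! hno
  have hper : ∀ z ∈ Set.Icc a b, z ∉ periodicPts f := fun z hz hz' =>
    let ⟨n, hn, hfix⟩ := mem_periodicPts.mp hz'
    hno z hz ⟨n, hn, hfix⟩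
  obtain ⟨q₁, hq₁, q₂, hq₂, q₃, hq₃, h₁₂, h₂₃⟩ := exists_mem_lt_lt_of_ne hp₁ hp₂ hp₃ h12 h13 h23
  exact not_lt_lt_of_mapClusterPt hf hper hq₁.1 hq₃.1 (mapClusterPt_of_mem_omegaSet hq₁.2)
    (mapClusterPt_of_mem_omegaSet hq₂.2) (mapClusterPt_of_mem_omegaSet hq₃.2) ⟨h₁₂, h₂₃⟩

theorem stmt_1 (f : UI → UI) (hf : Continuous f)
    (h0 : Dynamics.coverEntropy f Set.univ = 0)
    (x : UI) (hinf : (omegaSet f x).Infinite)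
    (a b : UI) (p₁ p₂ p₃ : UI)
    (hp₁ : p₁ ∈ Set.Icc a b ∩ omegaSet f x)
    (hp₂ : p₂ ∈ Set.Icc a b ∩ omegaSet f x)
    (hp₃ : p₃ ∈ Set.Icc a b ∩ omegaSet f x)
    (h12 : p₁ ≠ p₂) (h13 : p₁ ≠ p₃) (h23 : p₂ ≠ p₃) :
    ∃ p ∈ Set.Icc a b, IsPerPt f p :=
  stmt_1_general f hf x a b p₁ p₂ p₃ hp₁ hp₂ hp₃ h12 h13 h23
end

section
/- Let f : [0,1] → [0,1] be continuous with zero topological entropy, and let x ∈ [0,1] with ω_f(x) infinite. If U is an open subinterval of [0,1] with U ∩ ω_f(x) ≠ ∅, then there exists n ≥ 0 such that fⁿ(U) contains a periodic point of f. -/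
open Filter Topology

open Function

/-!
Pick two times `c < d` at which the orbit of `x` visits `U = (a, b)` and put `g = f^[d - c]`, so that
`z = f^[c] x` and `g z` both lie in `U`. The images `g^[k] '' U` then form a chain of intervals whose
union `W` is connected and contains the whole `g`-orbit of `z`. If `g` had no fixed point in `W`, then
`g t - t` would have constant sign on `W`, the `g`-orbit of `z` would be monotone and hence convergent,
and the `f`-orbit of `x` would accumulate only on the finitely many `f`-images of its limit,
contradicting the infiniteness of `ω_f(x)`.
-/

theorem exists_eq_of_tendsto_residues {X : Type*} [TopologicalSpace X] [T2Space X]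
    {u : ℕ → X} {m : ℕ} (hm : 0 < m) {y : ℕ → X}
    (hy : ∀ r < m, Tendsto (fun s => u (m * s + r)) atTop (𝓝 (y r)))
    {ψ : ℕ → ℕ} (hψ : Tendsto ψ atTop atTop) {w : X} (hw : Tendsto (fun n => u (ψ n)) atTop (𝓝 w)) :
    ∃ r < m, y r = w := by
  have hres : ∃ r < m, ∃ᶠ n in atTop, ψ n % m = r := by
    by_contra! hnot
    have hall : ∀ᶠ n in atTop, ∀ r ∈ Finset.range m, ψ n % m ≠ r :=
      (Finset.eventually_all _).2 fun r hr => hnot r (Finset.mem_range.1 hr)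
    obtain ⟨n, hn⟩ := hall.exists
    exact hn _ (Finset.mem_range.2 (Nat.mod_lt _ hm)) rfl
  obtain ⟨r, hr, hfreq⟩ := hres
  -- along the times `n` with `ψ n ≡ r (mod m)`, `u ∘ ψ` runs through the sequence `u (m * · + r)`
  set l := atTop ⊓ 𝓟 {n | ψ n % m = r}
  have : l.NeBot := frequently_iff_neBot.1 hfreq
  have hle : l ≤ atTop := inf_le_left
  have hdiv : Tendsto (fun n => ψ n / m) l atTop :=
    (Nat.tendsto_div_const_atTop hm.ne').comp (hψ.mono_left hle)
  refine ⟨r, hr, tendsto_nhds_unique ((hy r hr).comp hdiv |>.congr' ?_) (hw.mono_left hle)⟩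
  filter_upwards [mem_inf_of_right (mem_principal_self _)] with n hn
  simp only [comp_apply, ← hn, Nat.div_add_mod]

section OmegaSet

variable {f : UI → UI}

theorem omegaSet_subset_omegaSet_iterate (x : UI) (c : ℕ) :
    omegaSet f x ⊆ omegaSet f (f^[c] x) := by
  rintro w ⟨φ, hφ, hw⟩
  have hcφ : ∀ n, c ≤ φ (n + c) := fun n => (Nat.le_add_left c n).trans hφ.le_apply
  refine ⟨fun n => φ (n + c) - c, fun n₁ n₂ h => ?_, ?_⟩
  · have := hφ (Nat.add_lt_add_right h c)
    have := hcφ n₁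
    dsimp only
    omega
  · refine ((tendsto_add_atTop_iff_nat c).2 hw).congr fun n => ?_
    rw [← iterate_add_apply, Nat.sub_add_cancel (hcφ n)]

theorem omegaSet_finite_of_tendsto_iterate (hf : Continuous f) {m : ℕ} (hm : 0 < m) {z β : UI}
    (h : Tendsto (fun s => (f^[m])^[s] z) atTop (𝓝 β)) : (omegaSet f z).Finite := by
  refine ((Set.finite_Iio m).image fun r => f^[r] β).subset ?_
  rintro w ⟨φ, hφ, hw⟩
  have hy : ∀ r < m, Tendsto (fun s => f^[m * s + r] z) atTop (𝓝 (f^[r] β)) := fun r _ =>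
    ((hf.iterate r).tendsto β).comp h |>.congr fun s => by
      rw [comp_apply, add_comm, iterate_add_apply, iterate_mul]
  exact exists_eq_of_tendsto_residues (u := fun n => f^[n] z) hm hy hφ.tendsto_atTop hw

end OmegaSet

section FixedPoints

theorem forall_lt_or_forall_gt_of_isPreconnected {α : Type*} [TopologicalSpace α] [LinearOrder α]
    [OrderClosedTopology α] {g : α → α} {W : Set α} (hW : IsPreconnected W)
    (hg : ContinuousOn g W) (hfix : ∀ t ∈ W, g t ≠ t) :
    (∀ t ∈ W, t < g t) ∨ (∀ t ∈ W, g t < t) := by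
  by_contra! h
  obtain ⟨⟨a, ha, hga⟩, b, hb, hgb⟩ := h
  obtain ⟨t, ht, hgt⟩ := hW.intermediate_value₂ ha hb hg continuousOn_id hga hgb
  exact hfix t ht hgt

variable {α : Type*} [CompleteLinearOrder α] [TopologicalSpace α] [OrderTopology α] {g : α → α}

theorem exists_tendsto_iterate_of_forall_ne {W : Set α} (hW : IsPreconnected W)
    (hg : ContinuousOn g W) (hfix : ∀ t ∈ W, g t ≠ t) {z : α} (hz : ∀ s, g^[s] z ∈ W) :
    ∃ β, Tendsto (fun s => g^[s] z) atTop (𝓝 β) := by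
  rcases forall_lt_or_forall_gt_of_isPreconnected hW hg hfix with hlt | hgt
  · refine ⟨_, tendsto_atTop_iSup (monotone_nat_of_le_succ fun s => ?_)⟩
    rw [iterate_succ_apply']
    exact (hlt _ (hz s)).le
  · refine ⟨_, tendsto_atTop_iInf (antitone_nat_of_succ_le fun s => ?_)⟩
    rw [iterate_succ_apply']
    exact (hgt _ (hz s)).le

theorem exists_fixedPt_mem_image_iterate (hg : Continuous g) {U : Set α} (hU : IsPreconnected U)
    {z : α} (hz : z ∈ U) (hgz : g z ∈ U)
    (hdiv : ¬∃ β, Tendsto (fun s => g^[s] z) atTop (𝓝 β)) :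
    ∃ k, ∃ p ∈ g^[k] '' U, g p = p := by
  by_contra! hno
  have hchain : ∀ k, (g^[k] '' U ∩ g^[k + 1] '' U).Nonempty := fun k =>
    ⟨g^[k + 1] z, ⟨g z, hgz, (iterate_succ_apply _ _ _).symm⟩, z, hz, rfl⟩
  have hW : IsPreconnected (⋃ k, g^[k] '' U) :=
    .iUnion_of_chain (fun k => hU.image _ (hg.iterate k).continuousOn) hchain
  refine hdiv (exists_tendsto_iterate_of_forall_ne hW hg.continuousOn ?_ fun s =>
    Set.mem_iUnion.2 ⟨s, z, hz, rfl⟩)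
  intro t ht
  obtain ⟨k, hk⟩ := Set.mem_iUnion.1 ht
  exact hno k t hk

end FixedPoints

theorem stmt_2_general (f : UI → UI) (hf : Continuous f)
    (x : UI) (hinf : (omegaSet f x).Infinite)
    (a b : UI) (hU : (Set.Ioo a b ∩ omegaSet f x).Nonempty) :
    ∃ n : ℕ, ∃ p ∈ f^[n] '' Set.Ioo a b, IsPerPt f p := by
  obtain ⟨y, hyU, φ, hφ, hφy⟩ := hU
  have hev : ∀ᶠ n in atTop, f^[φ n] x ∈ Set.Ioo a b := hφy.eventually (isOpen_Ioo.mem_nhds hyU)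
  obtain ⟨n₁, hn₁⟩ := hev.exists
  obtain ⟨n₂, hn₂, hlt⟩ := (hev.and (eventually_gt_atTop n₁)).exists
  have hcd : φ n₁ < φ n₂ := hφ hlt
  set m := φ n₂ - φ n₁
  have hm : 0 < m := Nat.sub_pos_of_lt hcd
  have hgz : f^[m] (f^[φ n₁] x) ∈ Set.Ioo a b := by
    rwa [← iterate_add_apply, Nat.sub_add_cancel hcd.le]
  obtain ⟨k, p, hp, hfix⟩ := exists_fixedPt_mem_image_iterate (hf.iterate m) isPreconnected_Ioo
    hn₁ hgz fun ⟨_, hβ⟩ => hinf ((omegaSet_finite_of_tendsto_iterate hf hm hβ).subset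
      (omegaSet_subset_omegaSet_iterate x _))
  exact ⟨m * k, p, by rwa [iterate_mul], m, hm, hfix⟩

theorem stmt_2 (f : UI → UI) (hf : Continuous f)
    (h0 : Dynamics.coverEntropy f Set.univ = 0)
    (x : UI) (hinf : (omegaSet f x).Infinite)
    (a b : UI) (hU : (Set.Ioo a b ∩ omegaSet f x).Nonempty) :
    ∃ n : ℕ, ∃ p ∈ f^[n] '' Set.Ioo a b, IsPerPt f p :=
  stmt_2_general f hf x hinf a b hU
end

section
/- Let f : [0,1] → [0,1] be continuous with zero topological entropy, and let ⟨u,v⟩ with u < v be an f-nonseparable pair. Then u > 0 and v < 1, i.e. neither u nor v is an endpoint of the interval. -/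
/-!
Suppose the left endpoint `⊥` lies in an infinite ω-limit set `ω(x)` and no point of `(⊥, v)` is
periodic. The orbit of `x` is injective (an eventually periodic orbit has a finite ω-limit set),
so it enters `(⊥, v)` and later returns closer to `⊥`: some `b ∈ (⊥, v)` has `f^k b < b`. As
`f^k` has no fixed point in `(⊥, v)`, the intermediate value theorem gives `f^k t < t` on all of
`(⊥, v)`, so once the orbit is in `(⊥, v)` its subsequence along the multiples of `k` is
monotone and converges to some `c`. But then `ω(x)` lies in the finite set
`{c, f c, …, f^(k-1) c}`. The right endpoint is the left endpoint of the dual order.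
-/

open Filter Topology

/-- A proper pair `⟨u,v⟩` is `f`-nonseparable: there is an infinite ω-limit set of `f`
containing `u` and `v` such that there is no periodic point of `f` strictly between them. -/
def FNonsep (f : UI → UI) (u v : UI) : Prop :=
  u ≠ v ∧ ∃ x : UI, (omegaSet f x).Infinite ∧ u ∈ omegaSet f x ∧ v ∈ omegaSet f x ∧
    ∀ p ∈ Set.Ioo (min u v) (max u v), ¬ IsPerPt f p

open Set Function omegaLimit

theorem tendsto_atTop_of_forall_tendsto_arithProg {β : Type*} {u : ℕ → β} {l : Filter β}
    {k n : ℕ} (hk : 0 < k) (h : ∀ r < k, Tendsto (fun j => u (r + (k * j + n))) atTop l) :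
    Tendsto u atTop l := by
  intro W hW
  obtain ⟨J, hJ⟩ := eventually_atTop.1 <|
    (eventually_all_finite (finite_Iio k)).2 fun r hr => h r hr hW
  refine eventually_atTop.2 ⟨k * J + n, fun m hm => ?_⟩
  have hJm : J ≤ (m - n) / k := (Nat.le_div_iff_mul_le hk).2 (by rw [mul_comm]; omega)
  have hm : (m - n) % k + (k * ((m - n) / k) + n) = m := by
    have := Nat.mod_add_div (m - n) k
    omega
  simpa only [hm] using hJ _ hJm ((m - n) % k) (Nat.mod_lt _ hk)

section Orbit

variable {α : Type*} [TopologicalSpace α] {f : α → α} {x : α}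

theorem omegaLimit_iterate_subset_of_tendsto [T2Space α] (hf : Continuous f) {k n : ℕ} {c : α}
    (hk : 0 < k) (h : Tendsto (fun j => f^[k * j + n] x) atTop (𝓝 c)) :
    ω⁺ (fun m y => f^[m] y) {x} ⊆ (fun r => f^[r] c) '' Iio k := by
  set S := (fun r => f^[r] c) '' Iio k
  have hS : Tendsto (fun m => f^[m] x) atTop (𝓝ˢ S) :=
    tendsto_atTop_of_forall_tendsto_arithProg hk fun r hr =>
      ((((hf.iterate r).tendsto c).comp h).mono_right
        (nhds_le_nhdsSet (s := S) ⟨r, hr, rfl⟩)).congr fun j => (iterate_add_apply f r _ x).symm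
  intro y hy
  rw [mem_omegaLimit_singleton_iff_mapClusterPt] at hy
  by_contra hyS
  have hdisj : Disjoint (𝓝ˢ S) (𝓝 y) :=
    ((finite_Iio k).image _).isCompact.disjoint_nhdsSet_left.2 fun z hz =>
      disjoint_nhds_nhds.2 (ne_of_mem_of_not_mem hz hyS)
  exact clusterPt_iff_not_disjoint.1 (hy.clusterPt.mono hS) hdisj.symm

theorem injective_iterate_of_omegaLimit_infinite [T2Space α] (hf : Continuous f)
    (hω : (ω⁺ (fun m y => f^[m] y) {x}).Infinite) : Injective fun m => f^[m] x := by
  refine Injective.of_lt_imp_ne fun n m hnm heq => hω ?_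
  have hper : IsPeriodicPt f (m - n) (f^[n] x) := by
    rw [IsPeriodicPt, IsFixedPt, ← iterate_add_apply, Nat.sub_add_cancel hnm.le]
    exact heq.symm
  refine ((finite_Iio _).image _).subset
    (omegaLimit_iterate_subset_of_tendsto hf (Nat.sub_pos_of_lt hnm) (n := n) (c := f^[n] x) ?_)
  exact tendsto_const_nhds.congr fun j => by rw [iterate_add_apply, (hper.mul_const j).eq]

end Orbit

theorem IsPreconnected.forall_lt_of_forall_ne {X β : Type*} [TopologicalSpace X]
    [LinearOrder β] [TopologicalSpace β] [OrderClosedTopology β] {s : Set X}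
    (hs : IsPreconnected s) {g h : X → β} (hg : ContinuousOn g s) (hh : ContinuousOn h s)
    (hne : ∀ t ∈ s, g t ≠ h t) {b : X} (hb : b ∈ s) (hlt : g b < h b) :
    ∀ t ∈ s, g t < h t := by
  intro t ht
  by_contra! hle
  obtain ⟨z, hz, hzeq⟩ := hs.intermediate_value₂ hb ht hg hh hlt.le hle
  exact hne z hz hzeq

section Order

variable {α : Type*} [ConditionallyCompleteLinearOrder α] [TopologicalSpace α] [OrderTopology α]
  {f : α → α} {x : α}

theorem exists_tendsto_iterate_of_le_self [OrderBot α] {v y : α} (hf : ∀ t < v, f t ≤ t)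
    (hy : y < v) : ∃ c, Tendsto (fun j => f^[j] y) atTop (𝓝 c) := by
  have hv : ∀ j, f^[j] y < v := by
    intro j
    induction j with
    | zero => exact hy
    | succ j ih => rw [iterate_succ_apply']; exact (hf _ ih).trans_lt ih
  have hanti : Antitone fun j => f^[j] y :=
    antitone_nat_of_succ_le fun j => by rw [iterate_succ_apply']; exact hf _ (hv j)
  exact ⟨_, tendsto_atTop_ciInf hanti (OrderBot.bddBelow _)⟩

variable [DenselyOrdered α]

theorem bot_notMem_omegaLimit [OrderBot α] (hf : Continuous f) {v : α} (hv : ⊥ < v)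
    (hper : ∀ p ∈ Ioo ⊥ v, p ∉ periodicPts f) (hω : (ω⁺ (fun m y => f^[m] y) {x}).Infinite) :
    ⊥ ∉ ω⁺ (fun m y => f^[m] y) {x} := by
  intro hbot
  rw [mem_omegaLimit_singleton_iff_mapClusterPt] at hbot
  have hne : ∀ᶠ m in atTop, f^[m] x ≠ ⊥ := by
    rw [← Nat.cofinite_eq_atTop]
    exact (injective_iterate_of_omegaLimit_infinite hf hω).tendsto_cofinite.eventually
      (eventually_cofinite_ne ⊥)
  have hnear : ∀ w, ⊥ < w → ∃ᶠ m in atTop, f^[m] x ∈ Ioo ⊥ w := fun w hw =>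
    ((hbot.frequently (Iio_mem_nhds hw)).and_eventually hne).mono fun m hm =>
      ⟨bot_lt_iff_ne_bot.2 hm.2, hm.1⟩
  obtain ⟨k, hk, b, hb, hfb⟩ : ∃ k, 0 < k ∧ ∃ b ∈ Ioo ⊥ v, f^[k] b < b := by
    obtain ⟨n, hn⟩ := (hnear v hv).exists
    obtain ⟨m, hm, hnm⟩ := ((hnear _ hn.1).and_eventually (eventually_gt_atTop n)).exists
    refine ⟨m - n, Nat.sub_pos_of_lt hnm, _, hn, ?_⟩
    rw [← iterate_add_apply, Nat.sub_add_cancel hnm.le]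
    exact hm.2
  have hlt : ∀ t ∈ Ioo ⊥ v, f^[k] t < t :=
    ordConnected_Ioo.isPreconnected.forall_lt_of_forall_ne (hf.iterate k).continuousOn
      continuousOn_id (fun t ht hfix => hper t ht ⟨k, hk, hfix⟩) hb hfb
  have hle : ∀ t < v, f^[k] t ≤ t := by
    -- `⊥` itself is handled by continuity: it lies in the closure of `(⊥, v)`.
    have : Icc ⊥ v ⊆ {t | f^[k] t ≤ t} := closure_Ioo hv.ne ▸
      closure_minimal (fun t ht => (hlt t ht).le) (isClosed_le (hf.iterate k) continuous_id)
    exact fun t ht => this ⟨bot_le, ht.le⟩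
  obtain ⟨n, hn⟩ := (hnear v hv).exists
  obtain ⟨c, hc⟩ := exists_tendsto_iterate_of_le_self hle hn.2
  refine hω (((finite_Iio k).image _).subset
    (omegaLimit_iterate_subset_of_tendsto hf hk (n := n) (c := c) ?_))
  simpa only [iterate_add_apply, iterate_mul] using hc

theorem top_notMem_omegaLimit [OrderTop α] (hf : Continuous f) {u : α} (hu : u < ⊤)
    (hper : ∀ p ∈ Ioo u ⊤, p ∉ periodicPts f) (hω : (ω⁺ (fun m y => f^[m] y) {x}).Infinite) :
    ⊤ ∉ ω⁺ (fun m y => f^[m] y) {x} :=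
  bot_notMem_omegaLimit (α := αᵒᵈ) hf hu (fun p hp => hper p ⟨hp.2, hp.1⟩) hω

end Order

theorem isPerPt_iff_mem_periodicPts {f : UI → UI} {p : UI} :
    IsPerPt f p ↔ p ∈ periodicPts f :=
  Iff.rfl

theorem omegaSet_eq_omegaLimit (f : UI → UI) (x : UI) :
    omegaSet f x = ω⁺ (fun m y => f^[m] y) {x} := by
  ext y
  rw [mem_omegaLimit_singleton_iff_mapClusterPt]
  constructor
  · rintro ⟨φ, hφ, hy⟩
    exact MapClusterPt.of_comp hφ.tendsto_atTop hy.mapClusterPt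
  · exact fun hy => hy.tendsto_subseq

theorem stmt_7_general (f : UI → UI) (hf : Continuous f)
    (u v : UI) (huv : u < v) (hns : FNonsep f u v) :
    (0 : ℝ) < (u : ℝ) ∧ (v : ℝ) < 1 := by
  obtain ⟨-, x, hinf, hu, hv, hper⟩ := hns
  rw [min_eq_left huv.le, max_eq_right huv.le] at hper
  simp only [isPerPt_iff_mem_periodicPts] at hper
  rw [omegaSet_eq_omegaLimit] at hinf hu hv
  constructor
  · have hu0 : u ≠ ⊥ := by
      rintro rfl
      exact bot_notMem_omegaLimit hf huv hper hinf hu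
    simpa using Subtype.coe_lt_coe.2 (bot_lt_iff_ne_bot.2 hu0)
  · have hv1 : v ≠ ⊤ := by
      rintro rfl
      exact top_notMem_omegaLimit hf huv hper hinf hv
    simpa using Subtype.coe_lt_coe.2 (lt_top_iff_ne_top.2 hv1)

theorem stmt_7 (f : UI → UI) (hf : Continuous f)
    (h0 : Dynamics.coverEntropy f Set.univ = 0)
    (u v : UI) (huv : u < v) (hns : FNonsep f u v) :
    (0 : ℝ) < (u : ℝ) ∧ (v : ℝ) < 1 :=
  stmt_7_general f hf u v huv hns
end

section
/- Let f : [0,1] → [0,1] be continuous and strongly mixing. Then f is a topological K system: for every k ≥ 2, every tuple (U₁,…,U_k) of nonempty open subsets of [0,1] has an independence set of positive density; in fact there exists n ≥ 1 such that nℕ = {n, 2n, 3n, …} is an independence set for (U₁,…,U_k). -/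
open Filter Topology

/-- `J` is an independence set for the tuple of sets `U 0, ..., U (k-1)`. -/
def IsIndepTupleSet (f : UI → UI) {k : ℕ} (U : Fin k → Set UI) (J : Set ℕ) : Prop :=
  ∀ F : Finset ℕ, ↑F ⊆ J → ∀ s : ℕ → Fin k, ∃ z : UI, ∀ i ∈ F, f^[i] z ∈ U (s i)

/-- A set of natural numbers has positive (lower) density. -/
def HasPosDensity (J : Set ℕ) : Prop :=
  0 < liminf (fun N => (Nat.card ↥(J ∩ Set.Iio N) : ℝ) / N) atTop

/-! Shrink each `U i` to a closed interval `[a i, b i]` with `0 < a i` and `b i < 1`. By mixing,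
for all large `p` the connected set `f^[p] '' [a i, b i]` meets both `[0, a j)` and `(b j, 1]`,
hence contains `[a j, b j]`. Fixing one such `n`, the map `f^[n]` carries every interval over
every other one, so every finite itinerary through the intervals along the times `n, 2n, 3n, …`
is realized by a point; and the positive multiples of `n` have positive density. -/

def IsStronglyMixing {X : Type*} [TopologicalSpace X] (f : X → X) : Prop :=
  ∀ U V : Set X, IsOpen U → IsOpen V → U.Nonempty → V.Nonempty →
    ∃ N : ℕ, ∀ n ≥ N, (f^[n] '' U ∩ V).Nonempty

section Order

variable {X : Type*} [TopologicalSpace X]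

theorem exists_Icc_subset_of_isOpen [LinearOrder X] [OrderTopology X] [DenselyOrdered X]
    [BoundedOrder X] [Nontrivial X] {U : Set X} (hU : IsOpen U) (hne : U.Nonempty) :
    ∃ a b, ⊥ < a ∧ a < b ∧ b < ⊤ ∧ Set.Icc a b ⊆ U := by
  have hdense : Dense (Set.Ioo (⊥ : X) ⊤) := by
    rw [dense_iff_closure_eq, closure_Ioo bot_ne_top, Set.Icc_bot_top]
  obtain ⟨x, hxU, hbx, hxt⟩ := hdense.inter_open_nonempty U hU hne
  obtain ⟨l, u, ⟨hlx, hxu⟩, hlu⟩ :=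
    (mem_nhds_iff_exists_Ioo_subset' ⟨⊥, hbx⟩ ⟨⊤, hxt⟩).1 (hU.mem_nhds hxU)
  obtain ⟨a, hla, hax⟩ := exists_between hlx
  obtain ⟨b, hxb, hbu⟩ := exists_between hxu
  exact ⟨a, b, bot_le.trans_lt hla, hax.trans hxb, hbu.trans_le le_top,
    (Set.Icc_subset_Ioo hla hbu).trans hlu⟩

variable {f : X → X}

theorem IsStronglyMixing.eventually_Icc_subset_image_iterate [LinearOrder X]
    [OrderClosedTopology X] (hmix : IsStronglyMixing f) (hf : Continuous f) {J V : Set X}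
    (hJ : IsPreconnected J) (hV : IsOpen V) (hVne : V.Nonempty) (hVJ : V ⊆ J) {a b : X}
    (ha : (Set.Iio a).Nonempty) (hb : (Set.Ioi b).Nonempty) :
    ∀ᶠ p in atTop, Set.Icc a b ⊆ f^[p] '' J := by
  have hlow := eventually_atTop.2 (hmix V _ hV isOpen_Iio hVne ha)
  have hhigh := eventually_atTop.2 (hmix V _ hV isOpen_Ioi hVne hb)
  filter_upwards [hlow, hhigh] with p ⟨u, huV, hua⟩ ⟨v, hvV, hbv⟩
  have hconn := (hJ.image _ (hf.iterate p).continuousOn).ordConnected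
  exact (Set.Icc_subset_Icc (le_of_lt hua) (le_of_lt hbv)).trans
    (hconn.out (Set.image_mono hVJ huV) (Set.image_mono hVJ hvV))

theorem IsStronglyMixing.exists_Icc_subset_image_iterate [ConditionallyCompleteLinearOrder X]
    [OrderTopology X] [DenselyOrdered X] {ι : Type*} [Finite ι] (hmix : IsStronglyMixing f)
    (hf : Continuous f) {a b : ι → X} (hab : ∀ i, a i < b i) (ha : ∀ i, (Set.Iio (a i)).Nonempty)
    (hb : ∀ i, (Set.Ioi (b i)).Nonempty) :
    ∃ n, 0 < n ∧ ∀ i j, Set.Icc (a j) (b j) ⊆ f^[n] '' Set.Icc (a i) (b i) := by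
  have hcov : ∀ᶠ p in atTop, ∀ i j, Set.Icc (a j) (b j) ⊆ f^[p] '' Set.Icc (a i) (b i) :=
    eventually_all.2 fun i => eventually_all.2 fun j =>
      hmix.eventually_Icc_subset_image_iterate hf isPreconnected_Icc isOpen_Ioo
        (Set.nonempty_Ioo.2 (hab i)) Set.Ioo_subset_Icc_self (ha j) (hb j)
  exact ((eventually_gt_atTop 0).and hcov).exists

end Order

theorem exists_iterate_mem_of_subset_image {X ι : Type*} {g : X → X} {A : ι → Set X}
    (hA : ∀ i, (A i).Nonempty) (hcov : ∀ i j, A j ⊆ g '' A i) (K : ℕ) (s : ℕ → ι) :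
    ∃ z, ∀ j ≤ K, g^[j] z ∈ A (s j) := by
  induction K generalizing s with
  | zero =>
    obtain ⟨z, hz⟩ := hA (s 0)
    exact ⟨z, fun j hj => by rwa [Nat.le_zero.1 hj]⟩
  | succ K ih =>
    obtain ⟨z₁, hz₁⟩ := ih (s ∘ Nat.succ)
    obtain ⟨z, hz, rfl⟩ := hcov (s 0) (s 1) (hz₁ 0 K.zero_le)
    refine ⟨z, fun j hj => ?_⟩
    cases j with
    | zero => exact hz
    | succ j => exact hz₁ j (by omega)

theorem isIndepTupleSet_multiples_of_subset_image {f : UI → UI} {k : ℕ} {U A : Fin k → Set UI}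
    {n : ℕ} (hn : 0 < n) (hA : ∀ i, (A i).Nonempty) (hAU : ∀ i, A i ⊆ U i)
    (hcov : ∀ i j, A j ⊆ f^[n] '' A i) :
    IsIndepTupleSet f U {m : ℕ | ∃ j : ℕ, 1 ≤ j ∧ m = n * j} := by
  intro F hF s
  obtain ⟨z, hz⟩ := exists_iterate_mem_of_subset_image hA hcov (F.sup id) (fun j => s (n * j))
  refine ⟨z, fun i hi => ?_⟩
  obtain ⟨j, hj, rfl⟩ := hF hi
  have hjK : j ≤ F.sup id := (Nat.le_mul_of_pos_left j hn).trans (F.le_sup (f := id) hi)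
  simpa only [Function.iterate_mul] using hAU _ (hz j hjK)

theorem hasPosDensity_of_eventually_le {J : Set ℕ} {c : ℝ} (hc : 0 < c)
    (h : ∀ᶠ N in atTop, c * N ≤ Nat.card ↥(J ∩ Set.Iio N)) : HasPosDensity J := by
  have hle_one : ∀ N : ℕ, (Nat.card ↥(J ∩ Set.Iio N) : ℝ) / N ≤ 1 := by
    intro N
    have hcard : Nat.card ↥(J ∩ Set.Iio N) ≤ N := by
      simpa using Nat.card_mono (Set.finite_Iio N) Set.inter_subset_right
    exact div_le_one_of_le₀ (by exact_mod_cast hcard) N.cast_nonneg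
  refine hc.trans_le (le_liminf_of_le (isCoboundedUnder_ge_of_le atTop hle_one) ?_)
  filter_upwards [h, eventually_gt_atTop 0] with N hN hN0
  rwa [le_div_iff₀ (by exact_mod_cast hN0)]

theorem le_mul_card_multiples_inter_Iio_add_one {n : ℕ} (hn : 0 < n) (N : ℕ) :
    N ≤ n * (Nat.card ↥({m : ℕ | ∃ j : ℕ, 1 ≤ j ∧ m = n * j} ∩ Set.Iio N) + 1) := by
  set q := (N - 1) / n
  have hsub : (n * ·) '' Set.Icc 1 q ⊆ {m : ℕ | ∃ j : ℕ, 1 ≤ j ∧ m = n * j} ∩ Set.Iio N := by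
    rintro _ ⟨j, ⟨hj1, hjq⟩, rfl⟩
    have hjq' : n * j ≤ n * q := Nat.mul_le_mul_left n hjq
    have hqN : n * q ≤ N - 1 := Nat.mul_div_le (N - 1) n
    have hj0 : 0 < n * j := Nat.mul_pos hn hj1
    exact ⟨⟨j, hj1, rfl⟩, show n * j < N by omega⟩
  have hq : q ≤ Nat.card ↥({m : ℕ | ∃ j : ℕ, 1 ≤ j ∧ m = n * j} ∩ Set.Iio N) := by
    calc q = Nat.card ↥((n * ·) '' Set.Icc 1 q) := by
            rw [Nat.card_image_of_injective (mul_right_injective₀ hn.ne')]; simp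
      _ ≤ _ := Nat.card_mono ((Set.finite_Iio N).subset Set.inter_subset_right) hsub
  have hNq : N - 1 < n * q + n := by
    simpa only [Nat.mul_comm] using Nat.lt_div_mul_add (a := N - 1) hn
  rw [Nat.mul_succ]
  have := Nat.mul_le_mul_left n hq
  omega

theorem hasPosDensity_multiples {n : ℕ} (hn : 0 < n) :
    HasPosDensity {m : ℕ | ∃ j : ℕ, 1 ≤ j ∧ m = n * j} := by
  refine hasPosDensity_of_eventually_le (c := 1 / (2 * n)) (by positivity) ?_
  filter_upwards [eventually_ge_atTop (2 * n)] with N hN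
  have hcard :
      (N : ℝ) ≤ n * (Nat.card ↥({m : ℕ | ∃ j : ℕ, 1 ≤ j ∧ m = n * j} ∩ Set.Iio N) + 1) := by
    exact_mod_cast le_mul_card_multiples_inter_Iio_add_one hn N
  have hn' : (0 : ℝ) < n := by exact_mod_cast hn
  have hN' : (2 * n : ℝ) ≤ N := by exact_mod_cast hN
  rw [div_mul_eq_mul_div, one_mul, div_le_iff₀ (by positivity)]
  nlinarith

theorem stmt_15 (f : UI → UI) (hf : Continuous f)
    (hmix : ∀ U V : Set UI, IsOpen U → IsOpen V → U.Nonempty → V.Nonempty →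
      ∃ N : ℕ, ∀ n ≥ N, (f^[n] '' U ∩ V).Nonempty) :
    ∀ (k : ℕ), 2 ≤ k → ∀ U : Fin k → Set UI, (∀ i, IsOpen (U i)) →
      (∀ i, (U i).Nonempty) →
      (∃ J : Set ℕ, HasPosDensity J ∧ IsIndepTupleSet f U J) ∧
      ∃ n : ℕ, 1 ≤ n ∧ IsIndepTupleSet f U {m : ℕ | ∃ j : ℕ, 1 ≤ j ∧ m = n * j} := by
  intro k _ U hU hUne
  choose a b ha hab hb hsub using fun i => exists_Icc_subset_of_isOpen (hU i) (hUne i)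
  obtain ⟨n, hn, hcov⟩ := IsStronglyMixing.exists_Icc_subset_image_iterate hmix hf hab
    (fun i => ⟨⊥, ha i⟩) (fun i => ⟨⊤, hb i⟩)
  have hindep := isIndepTupleSet_multiples_of_subset_image hn
    (fun i => Set.nonempty_Icc.2 (hab i).le) hsub hcov
  exact ⟨⟨_, hasPosDensity_multiples hn, hindep⟩, n, hn, hindep⟩
end

section
/- Let (X,T) be a topological dynamical system such that for every open cover 𝒰 of X consisting of two non-dense open sets, the combinatorial complexity 𝒞(𝒰) = lim_{n→∞} N(⋁_{i=1}^{n−1} T^{−i}𝒰) is strictly greater than 2. Then T is topologically transitive. -/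
open Filter Topology

variable {X : Type*} [MetricSpace X] [CompactSpace X]

/-- An element of the refinement cover `⋁_{i=1}^{n-1} T^{-i} {U, V}`,
determined by a choice function `c`. -/
def refElem (T : X → X) (U V : Set X) (n : ℕ) (c : ℕ → Bool) : Set X :=
  ⋂ i ∈ Finset.Icc 1 (n - 1), T^[i] ⁻¹' (if c i then U else V)

/-- The minimal cardinality of a subcover of `⋁_{i=1}^{n-1} T^{-i} {U, V}`. -/
noncomputable def refCoverNum (T : X → X) (U V : Set X) (n : ℕ) : ℕ∞ :=
  sInf {m : ℕ∞ | ∃ F : Finset (ℕ → Bool), (F.card : ℕ∞) = m ∧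
    ⋃ c ∈ F, refElem T U V n c = Set.univ}

lemma mem_refElem {T : X → X} {U V : Set X} {n : ℕ} {c : ℕ → Bool} {x : X} :
    x ∈ refElem T U V n c ↔ ∀ i ∈ Finset.Icc 1 (n - 1), T^[i] x ∈ (if c i then U else V) := by
  simp [refElem]

lemma refCoverNum_le_card (T : X → X) (U V : Set X) (n : ℕ) (F : Finset (ℕ → Bool))
    (hcov : ⋃ c ∈ F, refElem T U V n c = Set.univ) :
    refCoverNum T U V n ≤ (F.card : ℕ∞) :=
  sInf_le ⟨F, rfl, hcov⟩

lemma exists_closedBall_subset {O : Set X} (hO : IsOpen O) {x : X} (hx : x ∈ O) :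
    ∃ r : ℝ, 0 < r ∧ Metric.closedBall x r ⊆ O := by
  rcases Metric.isOpen_iff.mp hO x hx with ⟨ε, hε, hball⟩
  exact ⟨ε / 2, by linarith, (Metric.closedBall_subset_ball (by linarith)).trans hball⟩

lemma int_cb {x : X} {r : ℝ} (hr : 0 < r) : (interior (Metric.closedBall x r)).Nonempty :=
  ⟨x, interior_mono Metric.ball_subset_closedBall
    (by rw [Metric.isOpen_ball.interior_eq]; exact Metric.mem_ball_self hr)⟩

/-- With two constant choice functions: if no orbit visits both `D` and `E` at positive
times, then the cover `{Dᶜ, Eᶜ}` needs only the two constant itineraries. -/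
lemma star_cover (T : X → X) (D E : Set X) (n : ℕ)
    (hsep : ∀ (x : X) (i j : ℕ), 1 ≤ i → 1 ≤ j → T^[i] x ∈ D → T^[j] x ∈ E → False) :
    refCoverNum T Dᶜ Eᶜ n ≤ 2 := by
  classical
  have hcov : ⋃ c ∈ ({(fun _ => true : ℕ → Bool), (fun _ => false : ℕ → Bool)} :
      Finset (ℕ → Bool)), refElem T Dᶜ Eᶜ n c = Set.univ := by
    apply Set.eq_univ_of_forall
    intro x
    rw [Set.mem_iUnion₂]
    by_cases hx : ∃ i ∈ Finset.Icc 1 (n - 1), T^[i] x ∈ D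
    · obtain ⟨i₀, hi₀, hi₀D⟩ := hx
      refine ⟨fun _ => false, by simp, mem_refElem.mpr ?_⟩
      intro i himem
      simp only [Bool.false_eq_true, if_false, Set.mem_compl_iff]
      exact fun hiE => hsep x i₀ i (Finset.mem_Icc.mp hi₀).1 (Finset.mem_Icc.mp himem).1 hi₀D hiE
    · push_neg at hx
      refine ⟨fun _ => true, by simp, mem_refElem.mpr ?_⟩
      intro i himem
      simp only [if_true, Set.mem_compl_iff]
      exact hx i himem
  refine le_trans (refCoverNum_le_card T Dᶜ Eᶜ n _ hcov) ?_
  have h2 : ({(fun _ => true : ℕ → Bool), (fun _ => false : ℕ → Bool)} :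
      Finset (ℕ → Bool)).card ≤ 2 := by
    apply le_trans (Finset.card_insert_le _ _)
    simp
  exact_mod_cast h2

/-- Parity trick: if every point visits `D` at most once (at positive times) and `E` maps
to `D` after exactly `k` steps, then two alternating itineraries cover for the cover
`{Dᶜ, Eᶜ}`. -/
lemma parity_cover (T : X → X) (D E : Set X) (n k : ℕ) (hk : 1 ≤ k)
    (hmap : ∀ y ∈ E, T^[k] y ∈ D)
    (hD1 : ∀ (x : X) (i j : ℕ), 1 ≤ i → 1 ≤ j → T^[i] x ∈ D → T^[j] x ∈ D → i = j) :
    refCoverNum T Dᶜ Eᶜ n ≤ 2 := by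
  classical
  set c₀ : ℕ → Bool := fun i => decide ((i / k) % 2 = 0) with hc₀
  set c₁ : ℕ → Bool := fun i => decide ((i / k) % 2 = 1) with hc₁
  have h0t : ∀ i : ℕ, (i / k) % 2 = 0 → c₀ i = true := by intro i h; simp [hc₀, h]
  have h0f : ∀ i : ℕ, (i / k) % 2 = 1 → c₀ i = false := by intro i h; simp [hc₀, h]
  have h1t : ∀ i : ℕ, (i / k) % 2 = 1 → c₁ i = true := by intro i h; simp [hc₁, h]
  have h1f : ∀ i : ℕ, (i / k) % 2 = 0 → c₁ i = false := by intro i h; simp [hc₁, h]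
  have hflip' : ∀ j : ℕ, ((j + k) / k) % 2 = ((j / k) + 1) % 2 := by
    intro j; rw [Nat.add_div_right j (by omega : 0 < k)]
  have hcov : ⋃ c ∈ ({c₀, c₁} : Finset (ℕ → Bool)), refElem T Dᶜ Eᶜ n c = Set.univ := by
    apply Set.eq_univ_of_forall
    intro x
    rw [Set.mem_iUnion₂]
    by_cases hE : ∃ j ∈ Finset.Icc 1 (n - 1), T^[j] x ∈ E
    · obtain ⟨j, hjmem, hjE⟩ := hE
      have hj1 : 1 ≤ j := (Finset.mem_Icc.mp hjmem).1
      have hDjk : T^[j + k] x ∈ D := by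
        rw [add_comm, Function.iterate_add_apply]
        exact hmap _ hjE
      obtain ⟨c', hc'mem, hc'j, hc'jk⟩ :
          ∃ c' ∈ ({c₀, c₁} : Finset (ℕ → Bool)), c' j = true ∧ c' (j + k) = false := by
        rcases Nat.mod_two_eq_zero_or_one (j / k) with h | h
        · refine ⟨c₀, Finset.mem_insert_self _ _, h0t j h, h0f (j + k) ?_⟩
          rw [hflip']; omega
        · refine ⟨c₁, Finset.mem_insert_of_mem (Finset.mem_singleton_self _), h1t j h,
            h1f (j + k) ?_⟩
          rw [hflip']; omega
      refine ⟨c', hc'mem, mem_refElem.mpr ?_⟩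
      intro i himem
      have hi1 : 1 ≤ i := (Finset.mem_Icc.mp himem).1
      cases hci : c' i
      · simp only [Bool.false_eq_true, if_false, Set.mem_compl_iff]
        intro hiE
        have hDik : T^[i + k] x ∈ D := by
          rw [add_comm, Function.iterate_add_apply]
          exact hmap _ hiE
        have heq : i + k = j + k := hD1 x (i + k) (j + k) (by omega) (by omega) hDik hDjk
        have hij : i = j := by omega
        rw [hij, hc'j] at hci
        exact Bool.noConfusion hci
      · simp only [if_true, Set.mem_compl_iff]
        intro hiD
        have heq : i = j + k := hD1 x i (j + k) hi1 (by omega) hiD hDjk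
        rw [heq, hc'jk] at hci
        exact Bool.noConfusion hci
    · push_neg at hE
      by_cases hD : ∃ i ∈ Finset.Icc 1 (n - 1), T^[i] x ∈ D
      · obtain ⟨i₀, hi₀mem, hi₀D⟩ := hD
        have hi₀1 : 1 ≤ i₀ := (Finset.mem_Icc.mp hi₀mem).1
        obtain ⟨c', hc'mem, hc'i₀⟩ :
            ∃ c' ∈ ({c₀, c₁} : Finset (ℕ → Bool)), c' i₀ = false := by
          rcases Nat.mod_two_eq_zero_or_one (i₀ / k) with h | h
          · exact ⟨c₁, Finset.mem_insert_of_mem (Finset.mem_singleton_self _), h1f i₀ h⟩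
          · exact ⟨c₀, Finset.mem_insert_self _ _, h0f i₀ h⟩
        refine ⟨c', hc'mem, mem_refElem.mpr ?_⟩
        intro i himem
        cases hci : c' i
        · simp only [Bool.false_eq_true, if_false, Set.mem_compl_iff]
          exact hE i himem
        · simp only [if_true, Set.mem_compl_iff]
          intro hiD
          have heq : i = i₀ := hD1 x i i₀ (Finset.mem_Icc.mp himem).1 hi₀1 hiD hi₀D
          rw [heq, hc'i₀] at hci
          exact Bool.noConfusion hci
      · push_neg at hD
        refine ⟨c₀, Finset.mem_insert_self _ _, mem_refElem.mpr ?_⟩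
        intro i himem
        cases hci : c₀ i
        · simp only [Bool.false_eq_true, if_false, Set.mem_compl_iff]
          exact hE i himem
        · simp only [if_true, Set.mem_compl_iff]
          exact hD i himem
  refine le_trans (refCoverNum_le_card T Dᶜ Eᶜ n _ hcov) ?_
  have h2 : ({c₀, c₁} : Finset (ℕ → Bool)).card ≤ 2 := by
    apply le_trans (Finset.card_insert_le _ _)
    simp
  exact_mod_cast h2

/-- Produce the contradiction with `hcplx` from a pair of disjoint closed sets with
nonempty interiors whose complements form a cheap cover. -/
lemma build_false (T : X → X)
    (hcplx : ∀ U V : Set X, IsOpen U → IsOpen V → ¬ Dense U → ¬ Dense V →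
      U ∪ V = Set.univ → 2 < ⨆ n : ℕ, refCoverNum T U V n)
    (D E : Set X) (hDcl : IsClosed D) (hEcl : IsClosed E)
    (hDi : (interior D).Nonempty) (hEi : (interior E).Nonempty)
    (hDE : ∀ z, z ∈ D → z ∈ E → False)
    (hle : ∀ n, refCoverNum T Dᶜ Eᶜ n ≤ 2) : False := by
  have hunion : Dᶜ ∪ Eᶜ = Set.univ := by
    apply Set.eq_univ_of_forall
    intro z
    by_cases hz : z ∈ D
    · exact Or.inr fun hzE => hDE z hz hzE
    · exact Or.inl hz
  have hPnd : ¬ Dense (Dᶜ) := by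
    intro hd
    obtain ⟨w, hw1, hw2⟩ := hd.inter_open_nonempty (interior D) isOpen_interior hDi
    exact hw2 (interior_subset hw1)
  have hQnd : ¬ Dense (Eᶜ) := by
    intro hd
    obtain ⟨w, hw1, hw2⟩ := hd.inter_open_nonempty (interior E) isOpen_interior hEi
    exact hw2 (interior_subset hw1)
  exact absurd (hcplx Dᶜ Eᶜ hDcl.isOpen_compl hEcl.isOpen_compl hPnd hQnd hunion)
    (not_lt.mpr (iSup_le hle))

theorem stmt_16 (T : X → X) (hT : Continuous T)
    (hcplx : ∀ U V : Set X, IsOpen U → IsOpen V → ¬ Dense U → ¬ Dense V →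
      U ∪ V = Set.univ → 2 < ⨆ n : ℕ, refCoverNum T U V n) :
    ∀ U V : Set X, IsOpen U → IsOpen V → U.Nonempty → V.Nonempty →
      ∃ n : ℕ, (T^[n] '' U ∩ V).Nonempty := by
  classical
  intro U V hUo hVo hUne hVne
  by_contra hcon
  push_neg at hcon
  have H : ∀ (m : ℕ) (z : X), z ∈ U → T^[m] z ∈ V → False := by
    intro m z hz hz'
    have h1 : (T^[m] '' U ∩ V).Nonempty := ⟨T^[m] z, ⟨z, hz, rfl⟩, hz'⟩
    rw [hcon m] at h1
    exact Set.not_nonempty_empty h1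
  by_cases hA : ∃ y : X, ∃ r : ℝ, 0 < r ∧ Metric.closedBall y r ⊆ V ∧
      ∀ z ∈ Metric.closedBall y r, ∀ m : ℕ, T^[m] z ∉ U
  · -- Case A: a ball in V whose points never enter U under any iterate
    obtain ⟨y, r, hr, hEV, hEZ⟩ := hA
    obtain ⟨u, hu⟩ := hUne
    obtain ⟨s, hs, hDU⟩ := exists_closedBall_subset hUo hu
    refine build_false T hcplx (Metric.closedBall u s) (Metric.closedBall y r)
      Metric.isClosed_closedBall Metric.isClosed_closedBall (int_cb hs) (int_cb hr) ?_ ?_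
    · intro z hzD hzE
      exact hEZ z hzE 0 (by simpa using hDU hzD)
    · intro nn
      apply star_cover
      intro x i j hi hj hxD hxE
      rcases le_or_gt i j with hij | hij
      · refine H (j - i) (T^[i] x) (hDU hxD) ?_
        have hkey : T^[j] x = T^[j - i] (T^[i] x) := by
          rw [← Function.iterate_add_apply]; congr 1; omega
        rw [← hkey]; exact hEV hxE
      · refine hEZ (T^[j] x) hxE (i - j) ?_
        have hkey : T^[i] x = T^[i - j] (T^[j] x) := by
          rw [← Function.iterate_add_apply]; congr 1; omega
        rw [← hkey]; exact hDU hxD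
  · -- Case B
    push_neg at hA
    obtain ⟨v, hv⟩ := hVne
    obtain ⟨r, hr, hbV⟩ := exists_closedBall_subset hVo hv
    obtain ⟨z, hzB, m, hzU⟩ := hA v r hr hbV
    have hex : ∃ m : ℕ, (V ∩ T^[m] ⁻¹' U).Nonempty := ⟨m, z, hbV hzB, hzU⟩
    obtain ⟨a, haV, haU⟩ := Nat.find_spec hex
    set m₀ := Nat.find hex with hm₀def
    have hmin : ∀ m' : ℕ, m' < m₀ → (V ∩ T^[m'] ⁻¹' U) = ∅ := by
      intro m' hm'
      by_contra hne
      exact Nat.find_min hex hm' (Set.nonempty_iff_ne_empty.mpr hne)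
    have hm₀1 : 1 ≤ m₀ := by
      by_contra h
      have h0 : m₀ = 0 := by omega
      rw [h0] at haU
      exact H 0 a (by simpa using haU) (by simpa using haV)
    have hGo : IsOpen (V ∩ T^[m₀] ⁻¹' U) := hVo.inter (hUo.preimage (hT.iterate m₀))
    have K1 : ∀ g : X, g ∈ V ∩ T^[m₀] ⁻¹' U → ∀ mm : ℕ, 1 ≤ mm → T^[mm] g ∈ V → False := by
      intro g hg mm hmm hgV
      obtain ⟨hgV0, hgU⟩ := hg
      rcases lt_trichotomy mm m₀ with h1 | h1 | h1
      · have hkey : T^[m₀] g = T^[m₀ - mm] (T^[mm] g) := by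
          rw [← Function.iterate_add_apply]; congr 1; omega
        have hmem : T^[mm] g ∈ V ∩ T^[m₀ - mm] ⁻¹' U :=
          ⟨hgV, by rw [Set.mem_preimage, ← hkey]; exact hgU⟩
        have hemp := hmin (m₀ - mm) (by omega)
        rw [hemp] at hmem
        exact hmem
      · rw [h1] at hgV
        exact H 0 (T^[m₀] g) hgU (by simpa using hgV)
      · refine H (mm - m₀) (T^[m₀] g) hgU ?_
        have hkey : T^[mm] g = T^[mm - m₀] (T^[m₀] g) := by
          rw [← Function.iterate_add_apply]; congr 1; omega
        rw [← hkey]; exact hgV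
    have haG : a ∈ V ∩ T^[m₀] ⁻¹' U := ⟨haV, haU⟩
    by_cases hsing : ∀ b ∈ (V ∩ T^[m₀] ⁻¹' U), b = a
    · -- the good set is a singleton {a}, an isolated point never returning to V
      have hGa : (V ∩ T^[m₀] ⁻¹' U) = {a} :=
        Set.eq_singleton_iff_unique_mem.mpr ⟨haG, hsing⟩
      have haopen : IsOpen ({a} : Set X) := hGa ▸ hGo
      have hnr : ∀ mm, 1 ≤ mm → T^[mm] a ∈ V → False := K1 a haG
      by_cases hpre : ∃ k : ℕ, 1 ≤ k ∧ ∃ p : X, T^[k] p = a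
      · -- a has a preimage: parity construction
        obtain ⟨k, hk1, p, hp⟩ := hpre
        have hOo : IsOpen (T^[k] ⁻¹' ({a} : Set X)) := haopen.preimage (hT.iterate k)
        have hpmem : p ∈ T^[k] ⁻¹' ({a} : Set X) := by simpa using hp
        obtain ⟨s, hs, hEball⟩ := exists_closedBall_subset hOo hpmem
        refine build_false T hcplx ({a} : Set X) (Metric.closedBall p s)
          isClosed_singleton Metric.isClosed_closedBall
          ⟨a, by rw [haopen.interior_eq]; rfl⟩ (int_cb hs) ?_ ?_
        · intro w hw hwE
          have hwa : w = a := hw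
          have hka : T^[k] a = a := by
            have h2 := hEball hwE
            rw [hwa] at h2
            simpa using h2
          refine hnr k hk1 ?_
          rw [hka]; exact haV
        · intro nn
          refine parity_cover T _ _ nn k hk1 (fun y hy => hEball hy) ?_
          intro x i j hi hj hiD hjD
          by_contra hne
          have hia : T^[i] x = a := hiD
          have hja : T^[j] x = a := hjD
          rcases lt_or_gt_of_ne hne with hlt | hlt
          · have hkey : T^[j] x = T^[j - i] (T^[i] x) := by
              rw [← Function.iterate_add_apply]; congr 1; omega
            refine hnr (j - i) (by omega) ?_
            have h5 := hkey
            rw [hia] at h5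
            have h6 : T^[j - i] a = a := by rw [← h5]; exact hja
            rw [h6]; exact haV
          · have hkey : T^[i] x = T^[i - j] (T^[j] x) := by
              rw [← Function.iterate_add_apply]; congr 1; omega
            refine hnr (i - j) (by omega) ?_
            have h5 := hkey
            rw [hja] at h5
            have h6 : T^[i - j] a = a := by rw [← h5]; exact hia
            rw [h6]; exact haV
      · -- a has no preimage at positive times
        push_neg at hpre
        obtain ⟨u, hu⟩ := hUne
        have hua : u ≠ a := by
          intro h
          exact H 0 u hu (by simpa [h] using haV)
        have hd : 0 < dist u a := dist_pos.mpr hua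
        refine build_false T hcplx ({a} : Set X) (Metric.closedBall u (dist u a / 2))
          isClosed_singleton Metric.isClosed_closedBall
          ⟨a, by rw [haopen.interior_eq]; rfl⟩ (int_cb (by linarith)) ?_ ?_
        · intro w hw hwE
          have hwa : w = a := hw
          rw [hwa] at hwE
          have h2 : dist a u ≤ dist u a / 2 := Metric.mem_closedBall.mp hwE
          rw [dist_comm] at h2
          linarith
        · intro nn
          apply star_cover
          intro x i j hi hj hiD hjE
          exact hpre i hi x hiD
    · -- two distinct points in the good set: two disjoint balls
      push_neg at hsing
      obtain ⟨b, hbG, hba⟩ := hsing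
      obtain ⟨r₁, hr₁, hD1b⟩ := exists_closedBall_subset hGo haG
      obtain ⟨r₂, hr₂, hE2b⟩ := exists_closedBall_subset hGo hbG
      have hdab : 0 < dist a b := dist_pos.mpr (Ne.symm hba)
      set ρ := min (min r₁ r₂) (dist a b / 3) with hρdef
      have hρ : 0 < ρ := lt_min (lt_min hr₁ hr₂) (by linarith)
      have hDsub : Metric.closedBall a ρ ⊆ V ∩ T^[m₀] ⁻¹' U :=
        (Metric.closedBall_subset_closedBall ((min_le_left _ _).trans (min_le_left _ _))).trans hD1b
      have hEsub : Metric.closedBall b ρ ⊆ V ∩ T^[m₀] ⁻¹' U :=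
        (Metric.closedBall_subset_closedBall ((min_le_left _ _).trans (min_le_right _ _))).trans hE2b
      have hdisj : ∀ w, w ∈ Metric.closedBall a ρ → w ∈ Metric.closedBall b ρ → False := by
        intro w hwD hwE
        have h1 : dist w a ≤ ρ := Metric.mem_closedBall.mp hwD
        have h2 : dist w b ≤ ρ := Metric.mem_closedBall.mp hwE
        have h3 : ρ ≤ dist a b / 3 := min_le_right _ _
        have h4 := dist_triangle a w b
        rw [dist_comm w a] at h1
        linarith
      refine build_false T hcplx (Metric.closedBall a ρ) (Metric.closedBall b ρ)
        Metric.isClosed_closedBall Metric.isClosed_closedBall (int_cb hρ) (int_cb hρ) hdisj ?_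
      intro nn
      apply star_cover
      intro x i j hi hj hiD hjE
      rcases lt_trichotomy i j with h1 | h1 | h1
      · refine K1 (T^[i] x) (hDsub hiD) (j - i) (by omega) ?_
        have hkey : T^[j] x = T^[j - i] (T^[i] x) := by
          rw [← Function.iterate_add_apply]; congr 1; omega
        rw [← hkey]; exact (hEsub hjE).1
      · rw [h1] at hiD
        exact hdisj (T^[j] x) hiD hjE
      · refine K1 (T^[j] x) (hEsub hjE) (i - j) (by omega) ?_
        have hkey : T^[i] x = T^[i - j] (T^[j] x) := by
          rw [← Function.iterate_add_apply]; congr 1; omega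
        rw [← hkey]; exact (hDsub hiD).1
end
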